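/- If the half-open interval (a, b] is contained in a countable union of half-open intervals (a_i, b_i], then b − a ≤ Σ_{i=1}^{∞} (b_i − a_i). -/

import Mathlib

open Set MeasureTheory

theorem length_le_sum_of_countable_Ioc_cover_general (a b : ℝ)
    (A B : ℕ → ℝ) (hcov : Ioc a b ⊆ ⋃ i, Ioc (A i) (B i)) :
    ENNReal.ofReal (b - a) ≤ ∑' i, ENNReal.ofReal (B i - A i) := by
  calc ENNReal.ofReal (b - a) = volume (Ioc a b) := Real.volume_Ioc.symm
    _ ≤ volume (⋃ i, Ioc (A i) (B i)) := measure_mono hcov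
    _ ≤ ∑' i, volume (Ioc (A i) (B i)) := measure_iUnion_le _
    _ = ∑' i, ENNReal.ofReal (B i - A i) := by simp only [Real.volume_Ioc]

/-- If `(a, b]` is contained in a countable union of half-open intervals
`(aᵢ, bᵢ]`, then `b - a ≤ ∑ᵢ (bᵢ - aᵢ)` (the sum taken in `[0,∞]`). -/
theorem length_le_sum_of_countable_Ioc_cover (a b : ℝ) (hab : a ≤ b)
    (A B : ℕ → ℝ) (hcov : Ioc a b ⊆ ⋃ i, Ioc (A i) (B i)) :
    ENNReal.ofReal (b - a) ≤ ∑' i, ENNReal.ofReal (B i - A i) :=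
  length_le_sum_of_countable_Ioc_cover_general a b A B hcov
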